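/- Let 1 < p ≤ 2 and let u, g : ℝ^d × 𝕋 → ℂ be in L². Then |Im ∫_{ℝ^d×𝕋} ( i|u|^{p-1}u − i|g|^{p-1}g ) ḡ dy dx| ≤ C (‖u‖_{L²} + ‖g‖_{L²})^{p-1} ‖g‖_{L²}^{2-p} ‖g‖_{L^∞}^{p-1} ‖u − g‖_{L²}. -/

import Mathlib

open MeasureTheory Complex Filter Topology Set
open scoped Real ENNReal NNReal ComplexConjugate

noncomputable section

local instance : Fact ((0:ℝ) < 2 * Real.pi) := ⟨by positivity⟩

/-- Euclidean space `ℝ^d`. -/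
abbrev Rd (d : ℕ) := EuclideanSpace ℝ (Fin d)

/-- The torus `𝕋 = ℝ/(2πℤ)`. -/
abbrev Torus := AddCircle (2 * Real.pi)

/-- Fourier transform on `ℝ^d` (convention without normalization). -/
def FT (d : ℕ) (f : Rd d → ℂ) (ξ : Rd d) : ℂ :=
  ∫ y : Rd d, Complex.exp (-(Complex.I * ((inner ℝ y ξ : ℝ) : ℂ))) * f y

/-- Inverse Fourier transform on `ℝ^d`. -/
def IFT (d : ℕ) (f : Rd d → ℂ) (y : Rd d) : ℂ :=
  (((2 * Real.pi) ^ (-(d:ℝ)) : ℝ) : ℂ) *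
    ∫ ξ : Rd d, Complex.exp (Complex.I * ((inner ℝ y ξ : ℝ) : ℂ)) * f ξ

/-- Resolvent `(λ - Δ)⁻¹` of the Laplacian on `ℝ^d`, as the Fourier
multiplier `(λ + |ξ|²)⁻¹`. -/
def resLap (d : ℕ) (lam : ℝ) (u : Rd d → ℂ) : Rd d → ℂ :=
  IFT d fun ξ => (((lam + ‖ξ‖ ^ 2 : ℝ) : ℂ))⁻¹ * FT d u ξ

/-- Fractional Laplacian `(-Δ)^{s/2}` on `ℝ^d`, the Fourier multiplier `|ξ|^s`. -/
def fracLap (d : ℕ) (s : ℝ) (u : Rd d → ℂ) : Rd d → ℂ :=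
  IFT d fun ξ => ((‖ξ‖ ^ s : ℝ) : ℂ) * FT d u ξ

/-- Negative fractional power `(-Δ)^{-s/2}` on `ℝ^d`, the Fourier multiplier `|ξ|^{-s}`. -/
def fracNegLap (d : ℕ) (s : ℝ) (u : Rd d → ℂ) : Rd d → ℂ :=
  IFT d fun ξ => ((‖ξ‖ ^ (-s) : ℝ) : ℂ) * FT d u ξ

/-- Schrödinger propagator `e^{itΔ}` on the torus, via Fourier series. -/
def torusProp (t : ℝ) (g : Torus → ℂ) (x : Torus) : ℂ :=
  ∑' n : ℤ, Complex.exp (-(Complex.I * t * (n:ℂ) ^ 2)) * fourierCoeff g n * fourier n x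

/-- Schrödinger propagator `e^{itΔ}` on `ℝ^d`, via the explicit kernel. -/
def rdProp (d : ℕ) (t : ℝ) (f : Rd d → ℂ) (y : Rd d) : ℂ :=
  ((4 * Real.pi * Complex.I * t) ^ (-(d:ℂ)/2)) *
    ∫ y' : Rd d, Complex.exp (Complex.I * ((‖y - y'‖ ^ 2 : ℝ) : ℂ) / (4 * t)) * f y'

/-- Schrödinger propagator `e^{itΔ}` on the cylinder `ℝ^d × 𝕋`. -/
def cylProp (d : ℕ) (t : ℝ) (h : Rd d × Torus → ℂ) : Rd d × Torus → ℂ :=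
  fun z => rdProp d t (fun y' => torusProp t (fun x' => h (y', x')) z.2) z.1

/-- Partial Fourier transform in the `ℝ^d` variable, with normalization `(2π)^{-d/2}`. -/
def partialFT (d : ℕ) (h : Rd d × Torus → ℂ) (ξ : Rd d) (x : Torus) : ℂ :=
  (((2 * Real.pi) ^ (-(d:ℝ)/2) : ℝ) : ℂ) *
    ∫ y : Rd d, Complex.exp (-(Complex.I * ((inner ℝ y ξ : ℝ) : ℂ))) * h (y, x)

/-- The `H¹(𝕋)` norm, defined spectrally. -/
def torusH1 (g : Torus → ℂ) : ℝ :=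
  (∑' n : ℤ, (1 + (n:ℝ) ^ 2) * ‖fourierCoeff g n‖ ^ 2) ^ ((1:ℝ)/2)

/-- The mixed norm `‖u‖_{L^r_y H¹_x(ℝ^d×𝕋)}` (valued in `ℝ≥0∞`). -/
def yxLpH1 (d : ℕ) (r : ℝ) (u : Rd d × Torus → ℂ) : ℝ≥0∞ :=
  (∫⁻ y : Rd d, (ENNReal.ofReal (torusH1 fun x => u (y, x))) ^ r) ^ ((1:ℝ)/r)

/-- Coordinate partial derivative `∂_i` on `ℝ^d`. -/
def pd (d : ℕ) (i : Fin d) (f : Rd d → ℂ) (y : Rd d) : ℂ :=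
  fderiv ℝ f y (EuclideanSpace.single i 1)

/-- The Laplacian on `ℝ^d`, as the sum of second coordinate derivatives. -/
def lapY (d : ℕ) (f : Rd d → ℂ) (y : Rd d) : ℂ :=
  ∑ i : Fin d, pd d i (fun y' => pd d i f y') y

/-- The Laplacian on the torus, defined spectrally. -/
def torusLap (g : Torus → ℂ) (x : Torus) : ℂ :=
  ∑' n : ℤ, (-(n:ℂ) ^ 2) * fourierCoeff g n * fourier n x

/-- The Laplacian on the cylinder `ℝ^d × 𝕋`. -/
def cylLap (d : ℕ) (u : Rd d × Torus → ℂ) (z : Rd d × Torus) : ℂ :=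
  lapY d (fun y' => u (y', z.2)) z.1 + torusLap (fun x' => u (z.1, x')) z.2

/-- The Galilean phase `M(t) = e^{i|y|²/(4t)}`. -/
def Mphase (t : ℝ) {d : ℕ} (y : Rd d) : ℂ :=
  Complex.exp (Complex.I * ((‖y‖ ^ 2 : ℝ) : ℂ) / (4 * t))

/-- The fractional commutator vector field
`|J(t)|^s u = M(t)(−t²Δ_{ℝ^d})^{s/2}M(−t)e^{−itΔ_𝕋}u`. -/
def Jop (d : ℕ) (s t : ℝ) (u : Rd d × Torus → ℂ) : Rd d × Torus → ℂ :=
  fun z => Mphase t z.1 * (((t ^ s : ℝ) : ℂ) *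
    fracLap d s (fun y' => Mphase (-t) y' *
      torusProp (-t) (fun x' => u (y', x')) z.2) z.1)

/-- The `H¹(ℝ^d × 𝕋)` norm, defined spectrally via the partial Fourier transform
in `y` and Fourier coefficients in `x`. -/
def cylH1norm (d : ℕ) (f : Rd d × Torus → ℂ) : ℝ :=
  (∫ ξ : Rd d, ∑' n : ℤ,
      (1 + ‖ξ‖ ^ 2 + (n:ℝ) ^ 2) * ‖fourierCoeff (fun x => partialFT d f ξ x) n‖ ^ 2) ^ ((1:ℝ)/2)

/-! With `N(z) = |z|^α z` and `α = p - 1 ∈ (0, 1]`, the identity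
`N(u) - N(g) = |u|^α (u - g) + (|u|^α - |g|^α) g` and the inequality `x^α y ≤ x y^α` for `y ≤ x`
give `|N(u) - N(g)| ≤ (|u|^α + |g|^α) |u - g| ≤ 2 (|u| + |g|)^α |u - g|` pointwise.
Writing `|g| = |g|^{1-α} |g|^α ≤ |g|^{1-α} ‖g‖_∞^α`, the integral is then bounded by Hölder's
inequality with exponents `2/α`, `2/(1-α)` and `2`. -/

theorem Real.rpow_mul_le_mul_rpow_of_le {α x y : ℝ} (hα : α ≤ 1) (hy : 0 ≤ y) (hyx : y ≤ x) :
    x ^ α * y ≤ x * y ^ α := by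
  have hx : 0 ≤ x := hy.trans hyx
  have hsplit : ∀ t : ℝ, 0 ≤ t → t = t ^ α * t ^ (1 - α) := fun t ht => by
    rw [← Real.rpow_add' ht (by norm_num), add_sub_cancel, Real.rpow_one]
  calc x ^ α * y = x ^ α * y ^ α * y ^ (1 - α) := by rw [mul_assoc, ← hsplit y hy]
    _ ≤ x ^ α * y ^ α * x ^ (1 - α) := by gcongr
    _ = x * y ^ α := by rw [mul_right_comm, ← hsplit x hx]

theorem norm_rpow_smul_sub_rpow_smul_le {E : Type*} [NormedAddCommGroup E] [NormedSpace ℝ E]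
    {α : ℝ} (hα0 : 0 ≤ α) (hα1 : α ≤ 1) (a b : E) :
    ‖‖a‖ ^ α • a - ‖b‖ ^ α • b‖ ≤ (‖a‖ ^ α + ‖b‖ ^ α) * ‖a - b‖ := by
  wlog hba : ‖b‖ ≤ ‖a‖ generalizing a b
  · rw [← norm_neg, neg_sub, norm_sub_rev a b, add_comm]
    exact this b a (le_of_not_ge hba)
  have hpow : ‖b‖ ^ α ≤ ‖a‖ ^ α := Real.rpow_le_rpow (norm_nonneg b) hba hα0
  calc ‖‖a‖ ^ α • a - ‖b‖ ^ α • b‖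
      = ‖‖a‖ ^ α • (a - b) + (‖a‖ ^ α - ‖b‖ ^ α) • b‖ := by
        rw [smul_sub, sub_smul, sub_add_sub_cancel]
    _ ≤ ‖a‖ ^ α * ‖a - b‖ + (‖a‖ ^ α - ‖b‖ ^ α) * ‖b‖ := by
        refine (norm_add_le _ _).trans_eq ?_
        rw [norm_smul, norm_smul, Real.norm_of_nonneg (by positivity),
          Real.norm_of_nonneg (sub_nonneg.2 hpow)]
    _ ≤ ‖a‖ ^ α * ‖a - b‖ + ‖b‖ ^ α * ‖a - b‖ := by
        linarith [Real.rpow_mul_le_mul_rpow_of_le hα1 (norm_nonneg b) hba,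
          mul_le_mul_of_nonneg_left (norm_sub_norm_le a b) (Real.rpow_nonneg (norm_nonneg b) α)]
    _ = (‖a‖ ^ α + ‖b‖ ^ α) * ‖a - b‖ := by ring

theorem norm_I_rpow_mul_sub_mul_conj_le {α : ℝ} (hα0 : 0 ≤ α) (hα1 : α ≤ 1) (a b : ℂ) :
    ‖(I * ((‖a‖ ^ α : ℝ) : ℂ) * a - I * ((‖b‖ ^ α : ℝ) : ℂ) * b) * conj b‖ ≤
      2 * ‖b‖ ^ α * ((‖a‖ + ‖b‖) ^ α * ‖b‖ ^ (1 - α) * ‖a - b‖) := by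
  have hsum : ‖a‖ ^ α + ‖b‖ ^ α ≤ 2 * (‖a‖ + ‖b‖) ^ α := by
    have ha : ‖a‖ ^ α ≤ (‖a‖ + ‖b‖) ^ α := by gcongr; linarith [norm_nonneg b]
    have hb : ‖b‖ ^ α ≤ (‖a‖ + ‖b‖) ^ α := by gcongr; linarith [norm_nonneg a]
    linarith
  have hb : ‖b‖ = ‖b‖ ^ (1 - α) * ‖b‖ ^ α := by
    rw [← Real.rpow_add_of_nonneg (norm_nonneg b) (by linarith) hα0, sub_add_cancel,
      Real.rpow_one]
  have hfactor : (I * ((‖a‖ ^ α : ℝ) : ℂ) * a - I * ((‖b‖ ^ α : ℝ) : ℂ) * b) * conj b =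
      I * conj b * (‖a‖ ^ α • a - ‖b‖ ^ α • b) := by
    simp only [Complex.real_smul]; ring
  calc ‖(I * ((‖a‖ ^ α : ℝ) : ℂ) * a - I * ((‖b‖ ^ α : ℝ) : ℂ) * b) * conj b‖
      = ‖‖a‖ ^ α • a - ‖b‖ ^ α • b‖ * ‖b‖ := by
        rw [hfactor, norm_mul, norm_mul, norm_I, RCLike.norm_conj, one_mul, mul_comm]
    _ ≤ (2 * (‖a‖ + ‖b‖) ^ α * ‖a - b‖) * ‖b‖ := by
        gcongr
        exact (norm_rpow_smul_sub_rpow_smul_le hα0 hα1 a b).trans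
          (mul_le_mul_of_nonneg_right hsum (norm_nonneg _))
    _ = 2 * ‖b‖ ^ α * ((‖a‖ + ‖b‖) ^ α * ‖b‖ ^ (1 - α) * ‖a - b‖) := by
        linear_combination (2 * (‖a‖ + ‖b‖) ^ α * ‖a - b‖) * hb

theorem enorm_I_rpow_mul_sub_mul_conj_le {α : ℝ} (hα0 : 0 ≤ α) (hα1 : α ≤ 1) (a b : ℂ) :
    ‖(I * ((‖a‖ ^ α : ℝ) : ℂ) * a - I * ((‖b‖ ^ α : ℝ) : ℂ) * b) * conj b‖ₑ ≤
      2 * ‖b‖ₑ ^ α * (‖‖a‖ + ‖b‖‖ₑ ^ α * ‖b‖ₑ ^ (1 - α) * ‖a - b‖ₑ) := by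
  rw [← ofReal_norm]
  refine (ENNReal.ofReal_le_ofReal (norm_I_rpow_mul_sub_mul_conj_le hα0 hα1 a b)).trans_eq ?_
  have h1α : 0 ≤ 1 - α := sub_nonneg.2 hα1
  rw [Real.enorm_of_nonneg (by positivity)]
  simp (disch := first | positivity | assumption) only [← ofReal_norm, ENNReal.ofReal_mul,
    ENNReal.ofReal_ofNat, ENNReal.ofReal_rpow_of_nonneg]

theorem eLpNorm_two_eq_lintegral_rpow_enorm {X E : Type*} [MeasurableSpace X] {μ : Measure X}
    [NormedAddCommGroup E] (f : X → E) :
    eLpNorm f 2 μ = (∫⁻ x, ‖f x‖ₑ ^ (2 : ℝ) ∂μ) ^ (1 / 2 : ℝ) := by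
  simpa using eLpNorm_eq_lintegral_rpow_enorm_toReal (f := f) (μ := μ) two_ne_zero ENNReal.ofNat_ne_top

theorem lintegral_enorm_rpow_mul_rpow_mul_le {X E F G : Type*} [MeasurableSpace X] {μ : Measure X}
    [NormedAddCommGroup E] [NormedAddCommGroup F] [NormedAddCommGroup G]
    {f : X → E} {g : X → F} {h : X → G} (hf : AEStronglyMeasurable f μ)
    (hg : AEStronglyMeasurable g μ) (hh : AEStronglyMeasurable h μ) {α : ℝ} (hα0 : 0 ≤ α)
    (hα1 : α ≤ 1) :
    ∫⁻ x, ‖f x‖ₑ ^ α * ‖g x‖ₑ ^ (1 - α) * ‖h x‖ₑ ∂μ ≤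
      eLpNorm f 2 μ ^ α * eLpNorm g 2 μ ^ (1 - α) * eLpNorm h 2 μ := by
  have key := ENNReal.lintegral_prod_norm_pow_le (μ := μ) Finset.univ
    (f := ![fun x => ‖f x‖ₑ ^ (2:ℝ), fun x => ‖g x‖ₑ ^ (2:ℝ), fun x => ‖h x‖ₑ ^ (2:ℝ)])
    (p := ![α / 2, (1 - α) / 2, 1 / 2])
    (by
      intro i _
      fin_cases i
      exacts [hf.enorm.pow_const _, hg.enorm.pow_const _, hh.enorm.pow_const _])
    (by
      simp only [Fin.sum_univ_three, Matrix.cons_val_zero, Matrix.cons_val_one,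
        Matrix.cons_val_two, Matrix.head_cons, Matrix.tail_cons]
      ring)
    (by
      intro i _
      fin_cases i
      exacts [div_nonneg hα0 zero_le_two, div_nonneg (sub_nonneg.2 hα1) zero_le_two,
        one_half_pos.le])
  have hhalf : ∀ t : ℝ, 2 * (t / 2) = t := fun t => by ring
  have hsqrt : ∀ (x : ℝ≥0∞) (t : ℝ), (x ^ (1 / 2 : ℝ)) ^ t = x ^ (t / 2) := fun x t => by
    rw [← ENNReal.rpow_mul, one_div_mul_eq_div]
  simp only [Fin.prod_univ_three, Matrix.cons_val_zero, Matrix.cons_val_one, Matrix.cons_val_two,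
    Matrix.head_cons, Matrix.tail_cons, ← ENNReal.rpow_mul, hhalf, ENNReal.rpow_one] at key
  rwa [eLpNorm_two_eq_lintegral_rpow_enorm f,
    eLpNorm_two_eq_lintegral_rpow_enorm g, eLpNorm_two_eq_lintegral_rpow_enorm h, hsqrt, hsqrt]

theorem enorm_integral_I_rpow_mul_sub_mul_conj_le {X : Type*} [MeasurableSpace X] {μ : Measure X}
    {α : ℝ} (hα0 : 0 ≤ α) (hα1 : α ≤ 1) {u g : X → ℂ} (hu : AEStronglyMeasurable u μ)
    (hg : AEStronglyMeasurable g μ) :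
    ‖∫ z, (I * ((‖u z‖ ^ α : ℝ) : ℂ) * u z - I * ((‖g z‖ ^ α : ℝ) : ℂ) * g z) * conj (g z) ∂μ‖ₑ ≤
      2 * (eLpNorm u 2 μ + eLpNorm g 2 μ) ^ α * eLpNorm g 2 μ ^ (1 - α) * eLpNorm g ∞ μ ^ α *
        eLpNorm (u - g) 2 μ := by
  set w : X → ℝ := fun z => ‖u z‖ + ‖g z‖
  have hw : eLpNorm w 2 μ ≤ eLpNorm u 2 μ + eLpNorm g 2 μ := by
    refine (eLpNorm_add_le hu.norm hg.norm one_le_two).trans_eq ?_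
    rw [eLpNorm_norm, eLpNorm_norm]
  have hpointwise : ∀ᵐ z ∂μ,
      ‖(I * ((‖u z‖ ^ α : ℝ) : ℂ) * u z - I * ((‖g z‖ ^ α : ℝ) : ℂ) * g z) * conj (g z)‖ₑ ≤
        2 * eLpNorm g ∞ μ ^ α * (‖w z‖ₑ ^ α * ‖g z‖ₑ ^ (1 - α) * ‖(u - g) z‖ₑ) := by
    filter_upwards [ae_le_eLpNormEssSup (f := g)] with z hz
    refine (enorm_I_rpow_mul_sub_mul_conj_le hα0 hα1 (u z) (g z)).trans ?_
    rw [eLpNorm_exponent_top]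
    gcongr
    rfl
  have hmeas : AEMeasurable (fun z => ‖w z‖ₑ ^ α * ‖g z‖ₑ ^ (1 - α) * ‖(u - g) z‖ₑ) μ :=
    ((hu.norm.add hg.norm).enorm.pow_const _ |>.mul (hg.enorm.pow_const _)).mul (hu.sub hg).enorm
  calc _ ≤ ∫⁻ z, ‖(I * ((‖u z‖ ^ α : ℝ) : ℂ) * u z - I * ((‖g z‖ ^ α : ℝ) : ℂ) * g z) *
          conj (g z)‖ₑ ∂μ := enorm_integral_le_lintegral_enorm _
    _ ≤ ∫⁻ z, 2 * eLpNorm g ∞ μ ^ α * (‖w z‖ₑ ^ α * ‖g z‖ₑ ^ (1 - α) * ‖(u - g) z‖ₑ) ∂μ :=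
        lintegral_mono_ae hpointwise
    _ = 2 * eLpNorm g ∞ μ ^ α * ∫⁻ z, ‖w z‖ₑ ^ α * ‖g z‖ₑ ^ (1 - α) * ‖(u - g) z‖ₑ ∂μ :=
        lintegral_const_mul'' _ hmeas
    _ ≤ 2 * eLpNorm g ∞ μ ^ α *
          (eLpNorm w 2 μ ^ α * eLpNorm g 2 μ ^ (1 - α) * eLpNorm (u - g) 2 μ) := by
        gcongr
        exact lintegral_enorm_rpow_mul_rpow_mul_le (hu.norm.add hg.norm) hg (hu.sub hg) hα0 hα1
    _ ≤ 2 * eLpNorm g ∞ μ ^ α *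
          ((eLpNorm u 2 μ + eLpNorm g 2 μ) ^ α * eLpNorm g 2 μ ^ (1 - α) * eLpNorm (u - g) 2 μ) := by
        gcongr
    _ = _ := by ring

theorem nonlinearity_continuity_general (d : ℕ) (p : ℝ) (hp : 1 < p) (hp2 : p ≤ 2) :
    ∃ C > 0, ∀ u g : Rd d × Torus → ℂ, MemLp u 2 volume → MemLp g 2 volume →
      ENNReal.ofReal |(∫ z : Rd d × Torus,
            (Complex.I * ((‖u z‖^(p-1) : ℝ) : ℂ) * u z
              - Complex.I * ((‖g z‖^(p-1) : ℝ) : ℂ) * g z) * conj (g z)).im| ≤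
        ENNReal.ofReal C * (eLpNorm u 2 volume + eLpNorm g 2 volume) ^ (p-1)
          * (eLpNorm g 2 volume) ^ (2-p) * (eLpNorm g ⊤ volume) ^ (p-1)
          * eLpNorm (u - g) 2 volume := by
  refine ⟨2, two_pos, fun u g hu hg => ?_⟩
  have hestimate := enorm_integral_I_rpow_mul_sub_mul_conj_le (μ := volume) (α := p - 1)
    (by linarith) (by linarith) hu.1 hg.1
  rw [show 1 - (p - 1) = 2 - p by ring, ← ofReal_norm] at hestimate
  rw [ENNReal.ofReal_ofNat]
  exact (ENNReal.ofReal_le_ofReal (abs_im_le_norm _)).trans hestimate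

/-- continuity estimate for the nonlinearity when `1 < p ≤ 2`. -/
theorem nonlinearity_continuity (d : ℕ) (hd : 1 ≤ d) (p : ℝ) (hp : 1 < p) (hp2 : p ≤ 2) :
    ∃ C > 0, ∀ u g : Rd d × Torus → ℂ, MemLp u 2 volume → MemLp g 2 volume →
      ENNReal.ofReal |(∫ z : Rd d × Torus,
            (Complex.I * ((‖u z‖^(p-1) : ℝ) : ℂ) * u z
              - Complex.I * ((‖g z‖^(p-1) : ℝ) : ℂ) * g z) * conj (g z)).im| ≤
        ENNReal.ofReal C * (eLpNorm u 2 volume + eLpNorm g 2 volume) ^ (p-1)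
          * (eLpNorm g 2 volume) ^ (2-p) * (eLpNorm g ⊤ volume) ^ (p-1)
          * eLpNorm (u - g) 2 volume :=
  nonlinearity_continuity_general d p hp hp2
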